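/- arXiv:2510.16390 — 3 statements merged into one kernel-verified Lean document; each statement's English description precedes it below -/
import Mathlib

section
/- Let η > 0 and ς > 0, let N ≥ 0 be an integer and let g_0, …, g_N be nonnegative real numbers. Define Γ_0 = 0 and Γ_{τ+1} = Γ_τ + g_τ² for 0 ≤ τ ≤ N, and set α_τ = η/√(Γ_{τ+1} + ς). If Γ_{N+1} ≥ ς, then Σ_{τ=0}^{N} α_τ · g_τ² ≥ (η/(2√2)) · √(Γ_{N+1}). -/
/-!
Every accumulator `Γ (τ+1) + ς` is at most `2 Γ (N+1)`, so each step size is at least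
`η / √(2 Γ (N+1))`; as the squared gradients sum to `Γ (N+1)`, the accumulated decrease is at
least `η Γ (N+1) / √(2 Γ (N+1)) = (η / √2) √(Γ (N+1))`, which beats the claim by a factor of `2`.
-/

open Finset Real

theorem eq_sum_range_of_succ_eq_add {M : Type*} [AddCommMonoid M] {Γ a : ℕ → M} {N : ℕ}
    (h0 : Γ 0 = 0) (hsucc : ∀ k ≤ N, Γ (k + 1) = Γ k + a k) :
    ∀ k ≤ N + 1, Γ k = ∑ i ∈ range k, a i := by
  intro k hk
  induction k with
  | zero => simp [h0]
  | succ k ih => rw [sum_range_succ, hsucc k (by omega), ih (by omega)]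

theorem div_sqrt_mul_sum_le_sum_div_sqrt_mul {ι : Type*} (s : Finset ι) {η B : ℝ} (hη : 0 ≤ η)
    {w b : ι → ℝ} (hw : ∀ i ∈ s, 0 ≤ w i) (hb : ∀ i ∈ s, 0 < b i) (hbB : ∀ i ∈ s, b i ≤ B) :
    η / √B * ∑ i ∈ s, w i ≤ ∑ i ∈ s, η / √(b i) * w i := by
  rw [mul_sum]
  refine sum_le_sum fun i hi => mul_le_mul_of_nonneg_right ?_ (hw i hi)
  exact div_le_div_of_nonneg_left hη (sqrt_pos.mpr (hb i hi)) (sqrt_le_sqrt (hbB i hi))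

theorem div_sqrt_mul_mul_eq_div_sqrt_mul_sqrt {c G : ℝ} (η : ℝ) (hc : 0 ≤ c) (hG : 0 ≤ G) :
    η / √(c * G) * G = η / √c * √G := by
  rcases hG.eq_or_lt with rfl | hG
  · simp
  rw [sqrt_mul hc]
  field_simp
  rw [sq_sqrt hG.le]

theorem adagrad_sum_lower_bound_general
    (η ς : ℝ) (hη : 0 < η) (hς : 0 < ς)
    (N : ℕ) (g Γ : ℕ → ℝ)
    (hΓ0 : Γ 0 = 0)
    (hΓ : ∀ τ ≤ N, Γ (τ + 1) = Γ τ + g τ ^ 2)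
    (hbig : ς ≤ Γ (N + 1)) :
    (η / (2 * Real.sqrt 2)) * Real.sqrt (Γ (N + 1)) ≤
      ∑ τ ∈ Finset.range (N + 1), (η / Real.sqrt (Γ (τ + 1) + ς)) * g τ ^ 2 := by
  have hpartial := eq_sum_range_of_succ_eq_add hΓ0 hΓ
  have hsum : ∑ τ ∈ range (N + 1), g τ ^ 2 = Γ (N + 1) := (hpartial _ le_rfl).symm
  have hle : ∀ τ ∈ range (N + 1), Γ (τ + 1) ≤ Γ (N + 1) := fun τ hτ => by
    rw [hpartial _ (by simpa using hτ), ← hsum]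
    exact sum_le_sum_of_subset_of_nonneg (range_subset_range.mpr (by simp at hτ; omega))
      fun _ _ _ => sq_nonneg _
  have hnonneg : ∀ τ ∈ range (N + 1), 0 ≤ Γ (τ + 1) := fun τ hτ => by
    rw [hpartial _ (by simpa using hτ)]
    exact sum_nonneg fun _ _ => sq_nonneg _
  have hG : 0 ≤ Γ (N + 1) := hς.le.trans hbig
  calc η / (2 * √2) * √(Γ (N + 1))
      ≤ η / √2 * √(Γ (N + 1)) := by
        gcongr
        linarith [sqrt_nonneg 2]
    _ = η / √(2 * Γ (N + 1)) * ∑ τ ∈ range (N + 1), g τ ^ 2 := by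
        rw [hsum, div_sqrt_mul_mul_eq_div_sqrt_mul_sqrt η zero_le_two hG]
    _ ≤ _ := div_sqrt_mul_sum_le_sum_div_sqrt_mul _ hη.le (fun _ _ => sq_nonneg _)
        (fun τ hτ => by linarith [hnonneg τ hτ]) (fun τ hτ => by linarith [hle τ hτ])

/-- AdaGrad-norm lower bound on the accumulated first-order decrease:
with `Γ 0 = 0`, `Γ (τ+1) = Γ τ + (g τ)^2` and step sizes
`α τ = η / √(Γ (τ+1) + ς)`, if `Γ (N+1) ≥ ς` then
`∑_{τ=0}^{N} α τ * (g τ)^2 ≥ (η/(2√2)) * √(Γ (N+1))`. -/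
theorem adagrad_sum_lower_bound
    (η ς : ℝ) (hη : 0 < η) (hς : 0 < ς)
    (N : ℕ) (g Γ : ℕ → ℝ)
    (hg : ∀ τ ≤ N, 0 ≤ g τ)
    (hΓ0 : Γ 0 = 0)
    (hΓ : ∀ τ ≤ N, Γ (τ + 1) = Γ τ + g τ ^ 2)
    (hbig : ς ≤ Γ (N + 1)) :
    (η / (2 * Real.sqrt 2)) * Real.sqrt (Γ (N + 1)) ≤
      ∑ τ ∈ Finset.range (N + 1), (η / Real.sqrt (Γ (τ + 1) + ς)) * g τ ^ 2 :=
  adagrad_sum_lower_bound_general η ς hη hς N g Γ hΓ0 hΓ hbig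
end

section
/- Let a > 0, b ≥ 0, c > 0 and t ≥ 1 be real numbers such that a·t ≤ b + c·log(t). Then t ≤ max(e^{b/c}, 4c²/a²). -/
/-- `log x ≤ x / e ≤ x / 2` for `x > 0`. -/
lemma log_le_half (x : ℝ) (hx : 0 < x) : Real.log x ≤ x / 2 := by
  have h1 : Real.log (x / Real.exp 1) ≤ x / Real.exp 1 - 1 :=
    Real.log_le_sub_one_of_pos (by positivity)
  have h2 : Real.log (x / Real.exp 1) = Real.log x - 1 := by
    rw [Real.log_div (ne_of_gt hx) (Real.exp_ne_zero 1), Real.log_exp]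
  have h3 : x / Real.exp 1 ≤ x / 2 := by
    apply div_le_div_of_nonneg_left hx.le (by norm_num)
    have := Real.add_one_le_exp (1 : ℝ)
    linarith
  linarith

/-- If `a·t ≤ b + c·log t` with `a > 0`, `b ≥ 0`, `c > 0` and `t ≥ 1`, then
`t ≤ max (e^{b/c}) (4c²/a²)`. -/
theorem linear_le_log_bound
    (a b c t : ℝ) (ha : 0 < a) (hb : 0 ≤ b) (hc : 0 < c) (ht : 1 ≤ t)
    (h : a * t ≤ b + c * Real.log t) :
    t ≤ max (Real.exp (b / c)) (4 * c ^ 2 / a ^ 2) := by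
  have ht0 : 0 < t := lt_of_lt_of_le one_pos ht
  by_cases hbt : c * Real.log t ≤ b
  · apply le_max_of_le_left
    have hlog : Real.log t ≤ b / c := by
      rw [le_div_iff₀ hc]; linarith
    calc t = Real.exp (Real.log t) := (Real.exp_log ht0).symm
    _ ≤ Real.exp (b / c) := Real.exp_le_exp.mpr hlog
  · apply le_max_of_le_right
    push_neg at hbt
    set s := Real.sqrt t with hs
    have hs1 : 1 ≤ s := by
      rw [hs, show (1:ℝ) = Real.sqrt 1 by simp]
      exact Real.sqrt_le_sqrt ht
    have hs0 : 0 < s := lt_of_lt_of_le one_pos hs1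
    have hts : t = s ^ 2 := by
      rw [hs, sq, Real.mul_self_sqrt ht0.le]
    have hlogt : Real.log t = 2 * Real.log s := by
      rw [hts, Real.log_pow]; push_cast; ring
    have hls : Real.log s ≤ s / 2 := log_le_half s hs0
    have key : a * s ^ 2 ≤ 2 * c * s := by
      calc a * s ^ 2 = a * t := by rw [hts]
      _ ≤ b + c * Real.log t := h
      _ ≤ 2 * (c * Real.log t) := by linarith
      _ = 4 * c * Real.log s := by rw [hlogt]; ring
      _ ≤ 4 * c * (s / 2) := by
          apply mul_le_mul_of_nonneg_left hls (by linarith)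
      _ = 2 * c * s := by ring
    have hs2 : a * s ≤ 2 * c := by
      have := mul_le_mul_of_nonneg_right key (le_of_lt (inv_pos.mpr hs0))
      rw [sq] at this
      field_simp at this ⊢
      calc a * s = a * s * s * s⁻¹ := by field_simp
      _ ≤ 2 * c * s * s⁻¹ := by
          rw [sq] at key; exact mul_le_mul_of_nonneg_right (by linarith [key]) (inv_pos.mpr hs0).le
      _ = 2 * c := by field_simp
    have : s ≤ 2 * c / a := by rw [le_div_iff₀ ha]; linarith
    calc t = s ^ 2 := hts
    _ ≤ (2 * c / a) ^ 2 := by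
        apply pow_le_pow_left₀ hs0.le this
    _ = 4 * c ^ 2 / a ^ 2 := by field_simp; ring
end

section
/- Suppose x ∈ ℝⁿ, α > 0 and β > 0 satisfy the switching condition ‖c(x)‖ ≤ β·α·‖g_T(x)‖, and let x⁺ = x − α·g_T(x) be the corresponding tangential step. Then ψ(x⁺) − ψ(x) ≤ −α‖g_T(x)‖² + ( (1/2)(L_L + ρL_c) + βL_λ + L_λL_c ) · α² ‖g_T(x)‖². -/
/-!
Freeze the multiplier at `λ̂(x)` and split
`ψ(x⁺) - ψ(x) = [ℒ(x⁺) - ℒ(x)] + ⟪λ̂(x⁺) - λ̂(x), c(x⁺)⟫ + ρ (‖c(x⁺)‖ - ‖c(x)‖)`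
with `ℒ = f + ⟪λ̂(x), c⟫`. The gradient of `ℒ` is `L_L`-Lipschitz and equals `g_T(x)` at `x`,
so the descent lemma bounds the first term by `-α‖g_T‖² + (L_L/2) α²‖g_T‖²`. Since
`J(x) g_T(x) = 0`, the step is tangent to the constraints and the Taylor bound for `c` gives
`‖c(x⁺)‖ ≤ ‖c(x)‖ + (L_c/2) α²‖g_T‖²`. The middle term is at most
`L_λ α‖g_T‖ (‖c(x)‖ + L_c α‖g_T‖)`, and the switching condition turns `‖c(x)‖` into `βα‖g_T‖`.
-/

open RealInnerProductSpace

section Gradient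

variable {F E : Type*} [NormedAddCommGroup F] [InnerProductSpace ℝ F] [CompleteSpace F]
  [NormedAddCommGroup E] [InnerProductSpace ℝ E] [CompleteSpace E]

theorem HasGradientAt.hasDerivAt_add_smul {L : F → ℝ} {G x d : F} {t : ℝ}
    (h : HasGradientAt L G (x + t • d)) :
    HasDerivAt (fun t : ℝ => L (x + t • d)) ⟪G, d⟫ t := by
  have hline : HasDerivAt (fun t : ℝ => x + t • d) d t := by
    simpa using ((hasDerivAt_id t).smul_const d).const_add x
  have := h.hasFDerivAt.comp_hasDerivAt t hline
  simp only [InnerProductSpace.toDual_apply_apply] at this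
  exact this

theorem HasGradientAt.add_inner_comp {f : F → ℝ} {c : F → E} {G y : F} {J : F →L[ℝ] E}
    (hf : HasGradientAt f G y) (hc : HasFDerivAt c J y) (μ : E) :
    HasGradientAt (fun y => f y + ⟪μ, c y⟫) (G + J.adjoint μ) y := by
  rw [hasGradientAt_iff_hasFDerivAt] at hf ⊢
  refine (hf.add ((innerSL ℝ μ).hasFDerivAt.comp y hc)).congr_fderiv ?_
  ext v
  simp [InnerProductSpace.toDual_apply_apply, ContinuousLinearMap.adjoint_inner_left]

theorem le_add_inner_add_sq_of_lipschitz_gradient {L : F → ℝ} {G : F → F} {K : ℝ}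
    (hG : ∀ y, HasGradientAt L (G y) y) (hK : ∀ y z, ‖G y - G z‖ ≤ K * ‖y - z‖) (x d : F) :
    L (x + d) ≤ L x + ⟪G x, d⟫ + K / 2 * ‖d‖ ^ 2 := by
  set φ : ℝ → ℝ := fun t => L (x + t • d) - t * ⟪G x, d⟫ - K * ‖d‖ ^ 2 * t ^ 2 / 2
  have hφ : ∀ t, HasDerivAt φ (⟪G (x + t • d) - G x, d⟫ - K * ‖d‖ ^ 2 * t) t := by
    intro t
    have := (((hG (x + t • d)).hasDerivAt_add_smul).sub
      ((hasDerivAt_id t).mul_const ⟪G x, d⟫)).sub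
      (((hasDerivAt_pow 2 t).const_mul (K * ‖d‖ ^ 2)).div_const 2)
    exact this.congr_deriv (by rw [inner_sub_left]; ring)
  have hslope :
      ∀ t ∈ interior (Set.Ici (0 : ℝ)), ⟪G (x + t • d) - G x, d⟫ - K * ‖d‖ ^ 2 * t ≤ 0 := by
    intro t ht
    rw [interior_Ici] at ht
    have hdist : ‖x + t • d - x‖ = t * ‖d‖ := by
      rw [add_sub_cancel_left, norm_smul, Real.norm_of_nonneg ht.le]
    rw [sub_nonpos]
    calc ⟪G (x + t • d) - G x, d⟫ ≤ ‖G (x + t • d) - G x‖ * ‖d‖ := real_inner_le_norm _ _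
      _ ≤ K * (t * ‖d‖) * ‖d‖ := by
          gcongr
          exact hdist ▸ hK _ _
      _ = K * ‖d‖ ^ 2 * t := by ring
  have hanti : AntitoneOn φ (Set.Ici 0) :=
    antitoneOn_of_hasDerivWithinAt_nonpos (convex_Ici 0)
      (fun t _ => (hφ t).continuousAt.continuousWithinAt)
      (fun t _ => (hφ t).hasDerivWithinAt) hslope
  have := hanti Set.self_mem_Ici (Set.mem_Ici.2 zero_le_one) zero_le_one
  simp only [φ, zero_smul, one_smul, add_zero] at this
  linarith

end Gradient

theorem inner_sub_le_of_lipschitz {F E : Type*} [SeminormedAddCommGroup F]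
    [NormedAddCommGroup E] [InnerProductSpace ℝ E] {lam c : F → E} {Llam Lc : ℝ}
    (hlam : ∀ y z, ‖lam y - lam z‖ ≤ Llam * ‖y - z‖) (hc : ∀ y z, ‖c y - c z‖ ≤ Lc * ‖y - z‖)
    (x z : F) :
    ⟪lam z - lam x, c z⟫ ≤ Llam * ‖z - x‖ * (‖c x‖ + Lc * ‖z - x‖) := by
  have hcz : ‖c z‖ ≤ ‖c x‖ + Lc * ‖z - x‖ := by
    linarith [norm_le_norm_add_norm_sub' (c z) (c x), hc z x]
  calc ⟪lam z - lam x, c z⟫ ≤ ‖lam z - lam x‖ * ‖c z‖ := real_inner_le_norm _ _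
    _ ≤ Llam * ‖z - x‖ * (‖c x‖ + Lc * ‖z - x‖) :=
      mul_le_mul (hlam z x) hcz (norm_nonneg _) ((norm_nonneg _).trans (hlam z x))

theorem tangential_step_lyapunov_decrease_general
    (n m : ℕ)
    (f : EuclideanSpace ℝ (Fin n) → ℝ)
    (c : EuclideanSpace ℝ (Fin n) → EuclideanSpace ℝ (Fin m))
    (J : EuclideanSpace ℝ (Fin n) → (EuclideanSpace ℝ (Fin n) →L[ℝ] EuclideanSpace ℝ (Fin m)))
    (g gT : EuclideanSpace ℝ (Fin n) → EuclideanSpace ℝ (Fin n))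
    (lam : EuclideanSpace ℝ (Fin n) → EuclideanSpace ℝ (Fin m))
    (ψ : EuclideanSpace ℝ (Fin n) → ℝ)
    (ρ Lc Llam LL : ℝ)
    -- differentiability: `g` is the gradient of `f` and `J` the Jacobian of `c`
    (hf : ∀ y, HasGradientAt f (g y) y)
    (hcdiff : ∀ y, HasFDerivAt c (J y) y)
    -- least-squares multiplier and projected gradient
    (hlam : ∀ y, (J y) ((ContinuousLinearMap.adjoint (J y)) (lam y)) = -((J y) (g y)))
    (hgT : ∀ y, gT y = g y + (ContinuousLinearMap.adjoint (J y)) (lam y))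
    -- Lyapunov function with fixed penalty parameter ρ ≥ 0
    (hρ : 0 ≤ ρ)
    (hψ : ∀ y, ψ y = f y + (inner ℝ (lam y) (c y) : ℝ) + ρ * ‖c y‖)
    -- Lipschitz hypotheses
    (hclip : ∀ y z, ‖c y - c z‖ ≤ Lc * ‖y - z‖)
    (hctay : ∀ y z, ‖c z - c y - (J y) (z - y)‖ ≤ (Lc / 2) * ‖z - y‖ ^ 2)
    (hlamlip : ∀ y z, ‖lam y - lam z‖ ≤ Llam * ‖y - z‖)
    (hLlip : ∀ (μ : EuclideanSpace ℝ (Fin m)) (y z : EuclideanSpace ℝ (Fin n)),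
      ‖(g y + (ContinuousLinearMap.adjoint (J y)) μ) -
          (g z + (ContinuousLinearMap.adjoint (J z)) μ)‖ ≤ LL * ‖y - z‖)
    -- the tangential step and the switching condition
    (x : EuclideanSpace ℝ (Fin n)) (α β : ℝ) (hα : 0 < α)
    (hswitch : ‖c x‖ ≤ β * α * ‖gT x‖) :
    ψ (x - α • gT x) - ψ x ≤
      -α * ‖gT x‖ ^ 2 +
        ((1 / 2) * (LL + ρ * Lc) + β * Llam + Llam * Lc) * α ^ 2 * ‖gT x‖ ^ 2 := by
  set z := x - α • gT x
  have hstep : z - x = -α • gT x := by simp [z, sub_eq_add_neg, neg_smul]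
  have hdist : ‖z - x‖ = α * ‖gT x‖ := by
    rw [hstep, norm_smul, Real.norm_eq_abs, abs_neg, abs_of_pos hα]
  have hdescent := le_add_inner_add_sq_of_lipschitz_gradient
    (fun y => (hf y).add_inner_comp (hcdiff y) (lam x)) (hLlip (lam x)) x (z - x)
  rw [add_sub_cancel, ← hgT, hstep, real_inner_smul_right, real_inner_self_eq_norm_sq,
    ← hstep, hdist] at hdescent
  have hJ : J x (z - x) = 0 := by
    rw [hstep, map_smul, hgT, map_add, hlam, add_neg_cancel, smul_zero]
  have hfeas : ‖c z‖ ≤ ‖c x‖ + Lc / 2 * (α * ‖gT x‖) ^ 2 := by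
    have := hctay x z
    rw [hJ, sub_zero, hdist] at this
    linarith [norm_le_norm_add_norm_sub' (c z) (c x)]
  have hdrift : ⟪lam z - lam x, c z⟫ ≤ (β * Llam + Llam * Lc) * α ^ 2 * ‖gT x‖ ^ 2 :=
    calc _ ≤ Llam * ‖z - x‖ * (‖c x‖ + Lc * ‖z - x‖) :=
          inner_sub_le_of_lipschitz hlamlip hclip x z
      _ ≤ Llam * ‖z - x‖ * (β * α * ‖gT x‖ + Lc * ‖z - x‖) := by
        gcongr
        exact (norm_nonneg _).trans (hlamlip z x)
      _ = _ := by rw [hdist]; ring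
  have hsplit : ⟪lam z, c z⟫ = ⟪lam x, c z⟫ + ⟪lam z - lam x, c z⟫ := by
    rw [inner_sub_left]; ring
  rw [hψ, hψ, hsplit]
  linarith [mul_le_mul_of_nonneg_left hfeas hρ]

/-- Lyapunov decrease along a tangential (projected-gradient) step of the
ADSWITCH algorithm: under the switching condition `‖c(x)‖ ≤ βα‖g_T(x)‖`, the
step `x⁺ = x − α g_T(x)` satisfies
`ψ(x⁺) − ψ(x) ≤ −α‖g_T(x)‖² + ((1/2)(L_L + ρL_c) + βL_λ + L_λL_c)α²‖g_T(x)‖²`,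
where `ψ(x) = f(x) + λ̂(x)ᵀc(x) + ρ‖c(x)‖`, `g_T(x) = g(x) + J(x)ᵀλ̂(x)` and
`λ̂(x)` is the least-squares multiplier, `(J(x)J(x)ᵀ)λ̂(x) = −J(x)g(x)`. -/
theorem tangential_step_lyapunov_decrease
    (n m : ℕ) (hmn : m ≤ n)
    (f : EuclideanSpace ℝ (Fin n) → ℝ)
    (c : EuclideanSpace ℝ (Fin n) → EuclideanSpace ℝ (Fin m))
    (J : EuclideanSpace ℝ (Fin n) → (EuclideanSpace ℝ (Fin n) →L[ℝ] EuclideanSpace ℝ (Fin m)))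
    (g gT : EuclideanSpace ℝ (Fin n) → EuclideanSpace ℝ (Fin n))
    (lam : EuclideanSpace ℝ (Fin n) → EuclideanSpace ℝ (Fin m))
    (ψ : EuclideanSpace ℝ (Fin n) → ℝ)
    (ρ Lc Llam LL : ℝ)
    -- differentiability: `g` is the gradient of `f` and `J` the Jacobian of `c`
    (hf : ∀ y, HasGradientAt f (g y) y)
    (hcdiff : ∀ y, HasFDerivAt c (J y) y)
    -- `J` has full row rank everywhere
    (hrank : ∀ y, Function.Surjective (J y))
    -- least-squares multiplier and projected gradient
    (hlam : ∀ y, (J y) ((ContinuousLinearMap.adjoint (J y)) (lam y)) = -((J y) (g y)))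
    (hgT : ∀ y, gT y = g y + (ContinuousLinearMap.adjoint (J y)) (lam y))
    -- Lyapunov function with fixed penalty parameter ρ ≥ 0
    (hρ : 0 ≤ ρ)
    (hψ : ∀ y, ψ y = f y + (inner ℝ (lam y) (c y) : ℝ) + ρ * ‖c y‖)
    -- Lipschitz hypotheses
    (hclip : ∀ y z, ‖c y - c z‖ ≤ Lc * ‖y - z‖)
    (hctay : ∀ y z, ‖c z - c y - (J y) (z - y)‖ ≤ (Lc / 2) * ‖z - y‖ ^ 2)
    (hlamlip : ∀ y z, ‖lam y - lam z‖ ≤ Llam * ‖y - z‖)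
    (hLlip : ∀ (μ : EuclideanSpace ℝ (Fin m)) (y z : EuclideanSpace ℝ (Fin n)),
      ‖(g y + (ContinuousLinearMap.adjoint (J y)) μ) -
          (g z + (ContinuousLinearMap.adjoint (J z)) μ)‖ ≤ LL * ‖y - z‖)
    -- the tangential step and the switching condition
    (x : EuclideanSpace ℝ (Fin n)) (α β : ℝ) (hα : 0 < α) (hβ : 0 < β)
    (hswitch : ‖c x‖ ≤ β * α * ‖gT x‖) :
    ψ (x - α • gT x) - ψ x ≤
      -α * ‖gT x‖ ^ 2 +
        ((1 / 2) * (LL + ρ * Lc) + β * Llam + Llam * Lc) * α ^ 2 * ‖gT x‖ ^ 2 :=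
  tangential_step_lyapunov_decrease_general n m f c J g gT lam ψ ρ Lc Llam LL hf hcdiff hlam hgT hρ
    hψ hclip hctay hlamlip hLlip x α β hα hswitch
end
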